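/- arXiv:1411.7862 — 4 statements merged into one kernel-verified Lean document; each statement's English description precedes it below -/
import Mathlib

section
/- Let B₂⁺ = B(x₀,2R) ∩ ℝⁿ₊ with x₀ ∈ closure(ℝⁿ₊), T = {xₙ = 0}, and let x* = (x', −xₙ) denote reflection. Define D = B₂⁺ ∪ B₂⁻ ∪ (B₂ ∩ T) where B₂⁻ = {x* : x ∈ B₂⁺}. If α : B₂⁺ ∪ (B₂ ∩ T) → (0,1] is log-Hölder continuous with constant M and 0 < α⁻ ≤ α⁺ < 1, then the reflected exponent α*(x), defined by α*(x) = α(x) for x ∈ B₂⁺ ∪ (B₂ ∩ T) and α*(x) = α(x*) for x ∈ B₂⁻, is log-Hölder continuous on D with constant at most max{M, 2α⁺ · max{ln 2, ln(2·diam D)}}. -/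
open Real Set Metric

noncomputable section

/-- The half-space reflection `x ↦ x* = (x', -xₙ)` in `ℝ^{n+1}`. -/
def reflPt {n : ℕ} (x : EuclideanSpace ℝ (Fin (n + 1))) : EuclideanSpace ℝ (Fin (n + 1)) :=
  (WithLp.equiv 2 (Fin (n + 1) → ℝ)).symm fun j => if j = Fin.last n then -(x j) else x j

/-- `B₂ = B(x₀, 2R)`. -/
def ballB {n : ℕ} (x₀ : EuclideanSpace ℝ (Fin (n + 1))) (R : ℝ) :
    Set (EuclideanSpace ℝ (Fin (n + 1))) := Metric.ball x₀ (2 * R)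

/-- `B₂⁺ = B₂ ∩ ℝⁿ₊`. -/
def upperPart {n : ℕ} (x₀ : EuclideanSpace ℝ (Fin (n + 1))) (R : ℝ) :
    Set (EuclideanSpace ℝ (Fin (n + 1))) := ballB x₀ R ∩ {x | 0 < x (Fin.last n)}

/-- `B₂ ∩ T` where `T = {xₙ = 0}`. -/
def flatPart {n : ℕ} (x₀ : EuclideanSpace ℝ (Fin (n + 1))) (R : ℝ) :
    Set (EuclideanSpace ℝ (Fin (n + 1))) := ballB x₀ R ∩ {x | x (Fin.last n) = 0}

/-- `D = B₂⁺ ∪ B₂⁻ ∪ (B₂ ∩ T)`. -/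
def reflDom {n : ℕ} (x₀ : EuclideanSpace ℝ (Fin (n + 1))) (R : ℝ) :
    Set (EuclideanSpace ℝ (Fin (n + 1))) :=
  upperPart x₀ R ∪ reflPt '' upperPart x₀ R ∪ flatPart x₀ R

/-- The reflected exponent `α*`. -/
def alphaStar {n : ℕ} (α : EuclideanSpace ℝ (Fin (n + 1)) → ℝ)
    (x : EuclideanSpace ℝ (Fin (n + 1))) : ℝ :=
  if 0 ≤ x (Fin.last n) then α x else α (reflPt x)

/-!
The reflected exponent is `α* = α ∘ fold`, where `fold x = (x', |xₙ|)` maps `D` into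
`B₂⁺ ∪ (B₂ ∩ T)` and is `1`-Lipschitz. So for `x ≠ y` in `D` the increment of `α*` is an increment
`|α u - α v|` of `α` with `|u - v| ≤ |x - y|`. If `|x - y| ≤ 1`, then `|ln|x - y|| ≤ |ln|u - v||`
and the constant `M` applies; if `|x - y| > 1`, then `|α u - α v| ≤ α⁺` (as `α⁻ > 0`) and
`0 < ln|x - y| ≤ ln(2 diam D)`.
-/

lemma EuclideanSpace.norm_le_norm_of_forall_abs_le {ι : Type*} [Fintype ι]
    {x y : EuclideanSpace ℝ ι} (h : ∀ i, |x i| ≤ |y i|) : ‖x‖ ≤ ‖y‖ := by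
  simp only [EuclideanSpace.norm_eq, Real.norm_eq_abs]
  exact sqrt_le_sqrt (Finset.sum_le_sum fun i _ => pow_le_pow_left₀ (abs_nonneg _) (h i) 2)

lemma Real.abs_log_le_abs_log_of_le {s t : ℝ} (hs : 0 < s) (hst : s ≤ t) (ht : t ≤ 1) :
    |log t| ≤ |log s| := by
  rw [abs_of_nonpos (log_nonpos (hs.trans_le hst).le ht),
    abs_of_nonpos (log_nonpos hs.le (hst.trans ht))]
  exact neg_le_neg (log_le_log hs hst)

lemma abs_sub_mul_abs_log_le_of_logHolder {E : Type*} [NormedAddCommGroup E] {f : E → ℝ}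
    {S : Set E} {αm αp M : ℝ} (hαm : 0 ≤ αm) (hf : ∀ x ∈ S, αm ≤ f x ∧ f x ≤ αp)
    (hlog : ∀ x ∈ S, ∀ y ∈ S, x ≠ y → |f x - f y| * |log ‖x - y‖| ≤ M)
    {u v : E} (hu : u ∈ S) (hv : v ∈ S) {t d : ℝ} (hut : ‖u - v‖ ≤ t) (ht : 0 < t)
    (htd : t ≤ d) :
    |f u - f v| * |log t| ≤ max M (2 * αp * max (log 2) (log (2 * d))) := by
  have hc : |f u - f v| ≤ αp := by
    obtain ⟨hu₁, hu₂⟩ := hf u hu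
    obtain ⟨hv₁, hv₂⟩ := hf v hv
    rw [abs_sub_le_iff]
    constructor <;> linarith
  have hαp : 0 ≤ αp := (abs_nonneg _).trans hc
  have hlog2 : 0 < log 2 := log_pos one_lt_two
  rcases le_or_gt t 1 with ht1 | ht1
  · rcases eq_or_ne u v with rfl | huv
    · rw [sub_self, abs_zero, zero_mul]
      exact le_max_of_le_right (by positivity)
    · have huv' : 0 < ‖u - v‖ := norm_pos_iff.mpr (sub_ne_zero.mpr huv)
      calc |f u - f v| * |log t| ≤ |f u - f v| * |log ‖u - v‖| := 
            mul_le_mul_of_nonneg_left (abs_log_le_abs_log_of_le huv' hut ht1) (abs_nonneg _)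
        _ ≤ M := hlog u hu v hv huv
        _ ≤ _ := le_max_left _ _
  · have hlogt : 0 < log t := log_pos ht1
    have hlogt_le : log t ≤ max (log 2) (log (2 * d)) :=
      le_max_of_le_right (log_le_log ht (by linarith))
    calc |f u - f v| * |log t| = |f u - f v| * log t := by rw [abs_of_pos hlogt]
      _ ≤ αp * max (log 2) (log (2 * d)) := by gcongr
      _ ≤ 2 * αp * max (log 2) (log (2 * d)) := 
          mul_le_mul_of_nonneg_right (by linarith) (hlog2.le.trans (le_max_left _ _))
      _ ≤ _ := le_max_right _ _

section Reflection

variable {n : ℕ}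

lemma reflPt_apply (x : EuclideanSpace ℝ (Fin (n + 1))) (j : Fin (n + 1)) :
    reflPt x j = if j = Fin.last n then -x j else x j := rfl

lemma reflPt_reflPt (x : EuclideanSpace ℝ (Fin (n + 1))) : reflPt (reflPt x) = x := by
  ext j
  by_cases hj : j = Fin.last n <;> simp [reflPt_apply, hj]

lemma isometry_reflPt : Isometry (reflPt : EuclideanSpace ℝ (Fin (n + 1)) → _) := by
  refine Isometry.of_dist_eq fun x y => ?_
  have h : ∀ j, |(reflPt x - reflPt y) j| = |(x - y) j| := fun j => by
    by_cases hj : j = Fin.last n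
    · simp [reflPt_apply, hj, neg_add_eq_sub, abs_sub_comm]
    · simp [reflPt_apply, hj]
  simp only [dist_eq_norm]
  exact le_antisymm (EuclideanSpace.norm_le_norm_of_forall_abs_le fun j => (h j).le)
    (EuclideanSpace.norm_le_norm_of_forall_abs_le fun j => (h j).ge)

def foldPt (x : EuclideanSpace ℝ (Fin (n + 1))) : EuclideanSpace ℝ (Fin (n + 1)) :=
  if 0 ≤ x (Fin.last n) then x else reflPt x

lemma alphaStar_eq_comp_foldPt (α : EuclideanSpace ℝ (Fin (n + 1)) → ℝ)
    (x : EuclideanSpace ℝ (Fin (n + 1))) : alphaStar α x = α (foldPt x) :=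
  (apply_ite α _ _ _).symm

lemma foldPt_apply (x : EuclideanSpace ℝ (Fin (n + 1))) (j : Fin (n + 1)) :
    foldPt x j = if j = Fin.last n then |x j| else x j := by
  unfold foldPt
  split_ifs with hx hj hj <;> simp_all [reflPt_apply, abs_of_nonneg, abs_of_neg]

lemma norm_foldPt_sub_foldPt_le (x y : EuclideanSpace ℝ (Fin (n + 1))) :
    ‖foldPt x - foldPt y‖ ≤ ‖x - y‖ := by
  refine EuclideanSpace.norm_le_norm_of_forall_abs_le fun j => ?_
  by_cases hj : j = Fin.last n
  · simpa [foldPt_apply, hj] using abs_abs_sub_abs_le_abs_sub (x j) (y j)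
  · simp [foldPt_apply, hj]

lemma foldPt_mem_of_mem_reflDom {x₀ : EuclideanSpace ℝ (Fin (n + 1))} {R : ℝ}
    {x : EuclideanSpace ℝ (Fin (n + 1))} (hx : x ∈ reflDom x₀ R) :
    foldPt x ∈ upperPart x₀ R ∪ flatPart x₀ R := by
  rcases hx with (hx | ⟨v, hv, rfl⟩) | hx
  · rw [foldPt, if_pos (le_of_lt hx.2)]
    exact Or.inl hx
  · have hneg : ¬ 0 ≤ reflPt v (Fin.last n) := by simpa [reflPt_apply] using hv.2
    rw [foldPt, if_neg hneg, reflPt_reflPt]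
    exact Or.inl hv
  · rw [foldPt, if_pos (ge_of_eq hx.2)]
    exact Or.inr hx

lemma isBounded_reflDom (x₀ : EuclideanSpace ℝ (Fin (n + 1))) (R : ℝ) :
    Bornology.IsBounded (reflDom x₀ R) := by
  have hup : Bornology.IsBounded (upperPart x₀ R) :=
    isBounded_ball.subset inter_subset_left
  exact (hup.union (isometry_reflPt.lipschitz.isBounded_image hup)).union
    (isBounded_ball.subset inter_subset_left)

end Reflection

theorem stmt_2_general {n : ℕ} (x₀ : EuclideanSpace ℝ (Fin (n + 1))) (R : ℝ)
    (α : EuclideanSpace ℝ (Fin (n + 1)) → ℝ) (αm αp M : ℝ)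
    (hαm : 0 < αm)
    (hα : ∀ x ∈ upperPart x₀ R ∪ flatPart x₀ R, αm ≤ α x ∧ α x ≤ αp)
    (hlog : ∀ x ∈ upperPart x₀ R ∪ flatPart x₀ R, ∀ y ∈ upperPart x₀ R ∪ flatPart x₀ R,
      x ≠ y → |α x - α y| * |Real.log ‖x - y‖| ≤ M) :
    ∀ x ∈ reflDom x₀ R, ∀ y ∈ reflDom x₀ R, x ≠ y →
      |alphaStar α x - alphaStar α y| * |Real.log ‖x - y‖| ≤
        max M (2 * αp * max (Real.log 2) (Real.log (2 * Metric.diam (reflDom x₀ R)))) := by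
  intro x hx y hy hxy
  rw [alphaStar_eq_comp_foldPt, alphaStar_eq_comp_foldPt]
  exact abs_sub_mul_abs_log_le_of_logHolder hαm.le hα hlog
    (foldPt_mem_of_mem_reflDom hx) (foldPt_mem_of_mem_reflDom hy) (norm_foldPt_sub_foldPt_le x y)
    (norm_pos_iff.mpr (sub_ne_zero.mpr hxy))
    (dist_eq_norm x y ▸ dist_le_diam_of_mem (isBounded_reflDom x₀ R) hx hy)

theorem stmt_2 {n : ℕ} (x₀ : EuclideanSpace ℝ (Fin (n + 1))) (R : ℝ) (hR : 0 < R)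
    (hx₀ : 0 ≤ x₀ (Fin.last n))
    (α : EuclideanSpace ℝ (Fin (n + 1)) → ℝ) (αm αp M : ℝ)
    (hαm : 0 < αm) (hαp : αp < 1)
    (hα : ∀ x ∈ upperPart x₀ R ∪ flatPart x₀ R, αm ≤ α x ∧ α x ≤ αp)
    (hα01 : ∀ x ∈ upperPart x₀ R ∪ flatPart x₀ R, α x ∈ Set.Ioc (0 : ℝ) 1)
    (hlog : ∀ x ∈ upperPart x₀ R ∪ flatPart x₀ R, ∀ y ∈ upperPart x₀ R ∪ flatPart x₀ R,
      x ≠ y → |α x - α y| * |Real.log ‖x - y‖| ≤ M) :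
    ∀ x ∈ reflDom x₀ R, ∀ y ∈ reflDom x₀ R, x ≠ y →
      |alphaStar α x - alphaStar α y| * |Real.log ‖x - y‖| ≤
        max M (2 * αp * max (Real.log 2) (Real.log (2 * Metric.diam (reflDom x₀ R)))) :=
  stmt_2_general x₀ R α αm αp M hαm hα hlog
end
end

section
/- Let e^{−2} < γ < ζ < 1, Ω = {x ∈ ℝⁿ : γ < |x| < ζ}, and f(x) = (|x| − γ)^{|x|}. Then f belongs to the variable Hölder space C^{α(·)}(Ω̄) with α(x) = |x|; more precisely |f(x) − f(y)| ≤ C |x−y|^{|x|} for all x, y ∈ Ω̄ and some constant C. -/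
open Real Set Metric

lemma aux_rpow_add_le (x y p : ℝ) (hx : 0 ≤ x) (hy : 0 ≤ y) (hp : 0 ≤ p) (hp1 : p ≤ 1) :
    (x + y) ^ p ≤ x ^ p + y ^ p := by
  have h := NNReal.rpow_add_le_add_rpow (x.toNNReal) (y.toNNReal) hp hp1
  have hxy : ((x.toNNReal + y.toNNReal : NNReal) : ℝ) = x + y := by
    simp [Real.coe_toNNReal _ hx, Real.coe_toNNReal _ hy]
  calc (x + y) ^ p = (((x.toNNReal + y.toNNReal : NNReal) : ℝ)) ^ p := by rw [hxy]
    _ = (((x.toNNReal + y.toNNReal) ^ p : NNReal) : ℝ) := by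
        rw [← NNReal.coe_rpow]
    _ ≤ ((x.toNNReal ^ p + y.toNNReal ^ p : NNReal) : ℝ) := by exact_mod_cast h
    _ = x ^ p + y ^ p := by
        rw [NNReal.coe_add, NNReal.coe_rpow, NNReal.coe_rpow,
          Real.coe_toNNReal _ hx, Real.coe_toNNReal _ hy]

lemma aux_rpow_sub (v w p : ℝ) (hv : 0 ≤ v) (hvw : v ≤ w) (hp : 0 ≤ p) (hp1 : p ≤ 1) :
    w ^ p - v ^ p ≤ (w - v) ^ p := by
  have h := aux_rpow_add_le v (w - v) p hv (by linarith) hp hp1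
  have : v + (w - v) = w := by ring
  rw [this] at h
  linarith

lemma aux_exp_factor {u c d g : ℝ} (hu : 0 < u) (hu1 : u ≤ 1) (hg : 0 < g)
    (hgc : g ≤ c) (hcd : c ≤ d) : u ^ c - u ^ d ≤ (d - c) / g := by
  have hlog : Real.log u ≤ 0 := Real.log_nonpos hu.le hu1
  -- u^d = u^c * u^(d-c)
  have hsplit : u ^ d = u ^ c * u ^ (d - c) := by
    rw [← Real.rpow_add hu]; ring_nf
  have hucpos : (0:ℝ) < u ^ c := Real.rpow_pos_of_pos hu c
  -- 1 - u^(d-c) ≤ (d-c) * (-log u)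
  have hexp : 1 - u ^ (d - c) ≤ (d - c) * (-Real.log u) := by
    have h1 : u ^ (d - c) = Real.exp ((d - c) * Real.log u) := by
      rw [Real.rpow_def_of_pos hu, mul_comm]
    rw [h1]
    nlinarith [Real.add_one_le_exp ((d - c) * Real.log u)]
  have step1 : u ^ c - u ^ d ≤ u ^ c * ((d - c) * (-Real.log u)) := by
    rw [hsplit]
    calc u ^ c - u ^ c * u ^ (d - c) = u ^ c * (1 - u ^ (d - c)) := by ring
      _ ≤ u ^ c * ((d - c) * (-Real.log u)) := by
          apply mul_le_mul_of_nonneg_left hexp hucpos.le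
  -- u^c ≤ u^g
  have hcg : u ^ c ≤ u ^ g := Real.rpow_le_rpow_of_exponent_ge hu hu1 hgc
  -- u^g * (-log u) ≤ 1/g
  have hkey : u ^ g * (-Real.log u) ≤ 1 / g := by
    have hinv : (0:ℝ) < 1 / u := by positivity
    have hlog2 : Real.log ((1/u) ^ g) ≤ (1/u) ^ g := by
      have := Real.log_le_sub_one_of_pos (Real.rpow_pos_of_pos hinv g)
      linarith
    have hloginv : Real.log (1/u) = -Real.log u := by
      rw [one_div, Real.log_inv]
    have hlog3 : g * (-Real.log u) ≤ (u ^ g)⁻¹ := by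
      rw [Real.log_rpow hinv, hloginv] at hlog2
      rwa [one_div, Real.inv_rpow hu.le] at hlog2
    have hugpos : (0:ℝ) < u ^ g := Real.rpow_pos_of_pos hu g
    have h4 : -Real.log u ≤ (u ^ g)⁻¹ / g := by
      rw [le_div_iff₀ hg]; linarith
    calc u ^ g * (-Real.log u) ≤ u ^ g * ((u ^ g)⁻¹ / g) := by
          apply mul_le_mul_of_nonneg_left h4 hugpos.le
      _ = 1 / g := by field_simp
  have hlogn : 0 ≤ -Real.log u := by linarith
  calc u ^ c - u ^ d ≤ u ^ c * ((d - c) * (-Real.log u)) := step1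
    _ ≤ u ^ g * ((d - c) * (-Real.log u)) := by
        apply mul_le_mul_of_nonneg_right hcg
        have : 0 ≤ d - c := by linarith
        positivity
    _ = (d - c) * (u ^ g * (-Real.log u)) := by ring
    _ ≤ (d - c) * (1 / g) := by
        apply mul_le_mul_of_nonneg_left hkey (by linarith)
    _ = (d - c) / g := by ring

lemma aux_oneD (γ ζ : ℝ) (hγ : 0 < γ) (h2 : γ < ζ) (h3 : ζ < 1)
    {a b : ℝ} (ha : a ∈ Set.Icc γ ζ) (hb : b ∈ Set.Icc γ ζ) :
    |(a - γ) ^ a - (b - γ) ^ b| ≤ |a - b| ^ a + |a - b| / γ := by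
  obtain ⟨ha1, ha2⟩ := ha
  obtain ⟨hb1, hb2⟩ := hb
  have hapos : 0 < a := lt_of_lt_of_le hγ ha1
  have hbpos : 0 < b := lt_of_lt_of_le hγ hb1
  have ha01 : a ≤ 1 := by linarith
  -- first part
  have first : |(a - γ) ^ a - (b - γ) ^ a| ≤ |a - b| ^ a := by
    rcases le_total (a - γ) (b - γ) with h | h
    · have := aux_rpow_sub (a - γ) (b - γ) a (by linarith) h hapos.le ha01
      have habs : |a - b| = (b - γ) - (a - γ) := by
        rw [abs_sub_comm, abs_of_nonneg (by linarith)]; ring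
      rw [habs, abs_sub_comm, abs_of_nonneg]
      · linarith
      · have := Real.rpow_le_rpow (by linarith : (0:ℝ) ≤ a - γ)
          (by linarith : a - γ ≤ b - γ) hapos.le
        linarith
    · have := aux_rpow_sub (b - γ) (a - γ) a (by linarith) h hapos.le ha01
      have habs : |a - b| = (a - γ) - (b - γ) := by
        rw [abs_of_nonneg (by linarith)]; ring
      rw [habs, abs_of_nonneg]
      · linarith
      · have := Real.rpow_le_rpow (by linarith : (0:ℝ) ≤ b - γ)
          (by linarith : b - γ ≤ a - γ) hapos.le
        linarith
  -- second part
  have second : |(b - γ) ^ a - (b - γ) ^ b| ≤ |a - b| / γ := by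
    rcases eq_or_lt_of_le (hb1 : γ ≤ b) with heq | hlt
    · have : b - γ = 0 := by linarith
      rw [this, Real.zero_rpow (ne_of_gt hapos), Real.zero_rpow (ne_of_gt hbpos)]
      simp
      positivity
    · have hu : 0 < b - γ := by linarith
      have hu1 : b - γ ≤ 1 := by linarith
      rcases le_total a b with h | h
      · have := aux_exp_factor hu hu1 hγ ha1 h
        rw [abs_of_nonneg (by
          have := Real.rpow_le_rpow_of_exponent_ge hu hu1 h
          linarith)]
        rw [abs_sub_comm, abs_of_nonneg (by linarith)]
        linarith
      · have := aux_exp_factor hu hu1 hγ hb1 h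
        rw [abs_sub_comm, abs_of_nonneg (by
          have := Real.rpow_le_rpow_of_exponent_ge hu hu1 h
          linarith)]
        rw [abs_of_nonneg (by linarith)]
        linarith
  calc |(a - γ) ^ a - (b - γ) ^ b|
      ≤ |(a - γ) ^ a - (b - γ) ^ a| + |(b - γ) ^ a - (b - γ) ^ b| := by
        have := abs_sub_abs_le_abs_sub ((a - γ) ^ a) ((b - γ) ^ b)
        exact abs_sub_le _ _ _
    _ ≤ |a - b| ^ a + |a - b| / γ := add_le_add first second

theorem stmt_6 {n : ℕ} (γ ζ : ℝ) (h1 : Real.exp (-2) < γ) (h2 : γ < ζ) (h3 : ζ < 1) :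
    ∃ C : ℝ, 0 < C ∧
      ∀ x ∈ closure {x : EuclideanSpace ℝ (Fin n) | γ < ‖x‖ ∧ ‖x‖ < ζ},
        ∀ y ∈ closure {x : EuclideanSpace ℝ (Fin n) | γ < ‖x‖ ∧ ‖x‖ < ζ},
          |(‖x‖ - γ) ^ ‖x‖ - (‖y‖ - γ) ^ ‖y‖| ≤ C * ‖x - y‖ ^ ‖x‖ := by
  have hγ : 0 < γ := lt_trans (Real.exp_pos _) h1
  refine ⟨2 + 1 / γ, by positivity, ?_⟩
  intro x hx y hy
  have hclosed : IsClosed {x : EuclideanSpace ℝ (Fin n) | γ ≤ ‖x‖ ∧ ‖x‖ ≤ ζ} :=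
    (isClosed_le continuous_const continuous_norm).inter
      (isClosed_le continuous_norm continuous_const)
  have hsub : closure {x : EuclideanSpace ℝ (Fin n) | γ < ‖x‖ ∧ ‖x‖ < ζ} ⊆
      {x : EuclideanSpace ℝ (Fin n) | γ ≤ ‖x‖ ∧ ‖x‖ ≤ ζ} :=
    closure_minimal (fun z hz => ⟨hz.1.le, hz.2.le⟩) hclosed
  obtain ⟨hx1, hx2⟩ := hsub hx
  obtain ⟨hy1, hy2⟩ := hsub hy
  set a := ‖x‖
  set b := ‖y‖
  set D := ‖x - y‖ with hD
  have hapos : 0 < a := lt_of_lt_of_le hγ hx1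
  have ha01 : a ≤ 1 := by linarith
  have hdD : |a - b| ≤ D := abs_norm_sub_norm_le x y
  have hDnn : 0 ≤ D := norm_nonneg _
  have h1d := aux_oneD γ ζ hγ h2 h3 ⟨hx1, hx2⟩ ⟨hy1, hy2⟩
  have hDa : 0 ≤ D ^ a := Real.rpow_nonneg hDnn a
  rcases le_total D 1 with hD1 | hD1
  · -- small distance case
    have hdd : |a - b| ^ a ≤ D ^ a := Real.rpow_le_rpow (abs_nonneg _) hdD hapos.le
    have hd1 : |a - b| ≤ |a - b| ^ a := by
      rcases eq_or_lt_of_le (abs_nonneg (a - b)) with h0 | h0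
      · rw [← h0, Real.zero_rpow (ne_of_gt hapos)]
      · calc |a - b| = |a - b| ^ (1:ℝ) := (Real.rpow_one _).symm
          _ ≤ |a - b| ^ a := Real.rpow_le_rpow_of_exponent_ge h0
              (le_trans hdD hD1) ha01
    have : |a - b| / γ ≤ D ^ a / γ := by
      gcongr
      exact le_trans hd1 hdd
    calc |(a - γ) ^ a - (b - γ) ^ b| ≤ |a - b| ^ a + |a - b| / γ := h1d
      _ ≤ D ^ a + D ^ a / γ := add_le_add hdd this
      _ = (1 + 1 / γ) * D ^ a := by ring
      _ ≤ (2 + 1 / γ) * D ^ a := by nlinarith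
  · -- large distance case
    have hDa1 : 1 ≤ D ^ a := Real.one_le_rpow hD1 hapos.le
    have hb1 : (a - γ) ^ a ≤ 1 :=
      Real.rpow_le_one (by linarith) (by linarith) hapos.le
    have hb2 : (b - γ) ^ ‖y‖ ≤ 1 :=
      Real.rpow_le_one (by linarith) (by linarith) (by
        have : 0 < b := lt_of_lt_of_le hγ hy1
        linarith)
    have hnn1 : 0 ≤ (a - γ) ^ a := Real.rpow_nonneg (by linarith) _
    have hnn2 : 0 ≤ (b - γ) ^ ‖y‖ := Real.rpow_nonneg (by linarith) _
    have habs : |(a - γ) ^ a - (b - γ) ^ b| ≤ 2 := by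
      rw [abs_sub_le_iff]
      constructor <;> linarith
    calc |(a - γ) ^ a - (b - γ) ^ b| ≤ 2 := habs
      _ ≤ 2 * D ^ a := by linarith
      _ ≤ (2 + 1 / γ) * D ^ a := by
          have : 0 < 1 / γ := by positivity
          nlinarith
end

section
/- Let e^{−2} < γ < ζ < 1, Ω = {x ∈ ℝⁿ : γ < |x| < ζ}, and f(x) = (|x| − γ)^{|x|}. Then for every β ∈ (γ, ζ], f is NOT β-Hölder continuous on Ω̄: taking x₀ = (γ, 0, …, 0) and xₙ = (γ + (β−γ)/2ⁿ, 0, …, 0), the quotient |f(x₀) − f(xₙ)| / |x₀ − xₙ|^β ≥ ((β−γ)/2ⁿ)^{(γ−β)/2} → ∞ as n → ∞. -/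
open Real Set Metric Filter

noncomputable section

/-- The function `f(x) = (|x| - γ)^{|x|}` (real power, with `0^s = 0` for `s ≠ 0`). -/
def fAnn {n : ℕ} (γ : ℝ) (x : EuclideanSpace ℝ (Fin (n + 1))) : ℝ :=
  (‖x‖ - γ) ^ ‖x‖

/-- The point `(t, 0, …, 0)` in `ℝ^{n+1}`. -/
def ptAnn (n : ℕ) (t : ℝ) : EuclideanSpace ℝ (Fin (n + 1)) :=
  EuclideanSpace.single 0 t

open scoped Topology

/-!
Along the ray through `e₁`, `f(γ + s) = s ^ (γ + s)` while `f(γ) = 0`, so the Hölder quotient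
between these two points is `s ^ (γ + s - β)`. For `0 < s ≤ (β - γ) / 2` the exponent is at most
`(γ - β) / 2 < 0`, and since `s < 1` the quotient is at least `s ^ ((γ - β) / 2)`, which blows up
as `s = (β - γ) / 2 ^ k → 0`. The points `γ e₁ + s e₁` lie in the annulus and converge to `γ e₁`,
which is therefore in its closure, so no Hölder constant can exist.
-/

lemma norm_ptAnn (n : ℕ) (a : ℝ) : ‖ptAnn n a‖ = |a| := by
  simp [ptAnn]

lemma isometry_ptAnn (n : ℕ) : Isometry (ptAnn n) :=
  Isometry.of_dist_eq fun a b => by simp [ptAnn]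

lemma norm_ptAnn_sub_ptAnn (n : ℕ) (a b : ℝ) : ‖ptAnn n a - ptAnn n b‖ = |a - b| := by
  rw [← dist_eq_norm, (isometry_ptAnn n).dist_eq, Real.dist_eq]

lemma ptAnn_mem_annulus (n : ℕ) {γ ζ a : ℝ} (hγ : 0 < γ) (hγa : γ < a) (haζ : a < ζ) :
    ptAnn n a ∈ {x : EuclideanSpace ℝ (Fin (n + 1)) | γ < ‖x‖ ∧ ‖x‖ < ζ} := by
  have ha : ‖ptAnn n a‖ = a := by rw [norm_ptAnn, abs_of_pos (hγ.trans hγa)]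
  exact ⟨ha.symm ▸ hγa, ha.symm ▸ haζ⟩

lemma fAnn_ptAnn_add (n : ℕ) {γ s : ℝ} (hγ : 0 < γ) (hs : 0 ≤ s) :
    fAnn (n := n) γ (ptAnn n (γ + s)) = s ^ (γ + s) := by
  rw [fAnn, norm_ptAnn, abs_of_pos (by positivity), add_sub_cancel_left]

lemma fAnn_ptAnn_holderQuotient (n : ℕ) {γ s : ℝ} (hγ : 0 < γ) (hs : 0 < s) (β : ℝ) :
    |fAnn (n := n) γ (ptAnn n γ) - fAnn (n := n) γ (ptAnn n (γ + s))| /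
      ‖ptAnn n γ - ptAnn n (γ + s)‖ ^ β = s ^ (γ + s - β) := by
  have hf₀ : fAnn (n := n) γ (ptAnn n γ) = 0 := by
    simpa [zero_rpow hγ.ne'] using fAnn_ptAnn_add n hγ le_rfl
  rw [hf₀, fAnn_ptAnn_add n hγ hs.le, norm_ptAnn_sub_ptAnn, sub_add_cancel_left, abs_neg,
    zero_sub, abs_neg, abs_of_pos hs, abs_of_pos (rpow_pos_of_pos hs _), ← rpow_sub hs]

lemma rpow_le_fAnn_ptAnn_holderQuotient (n : ℕ) {γ β s : ℝ} (hγ : 0 < γ) (hs : 0 < s)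
    (hs1 : s ≤ 1) (hsβ : s ≤ (β - γ) / 2) :
    s ^ ((γ - β) / 2) ≤
      |fAnn (n := n) γ (ptAnn n γ) - fAnn (n := n) γ (ptAnn n (γ + s))| /
        ‖ptAnn n γ - ptAnn n (γ + s)‖ ^ β := by
  rw [fAnn_ptAnn_holderQuotient n hγ hs]
  exact rpow_le_rpow_of_exponent_ge hs hs1 (by linarith)

lemma tendsto_div_two_pow_nhdsGT_zero {c : ℝ} (hc : 0 < c) :
    Tendsto (fun k : ℕ => c / 2 ^ k) atTop (𝓝[>] 0) :=
  tendsto_nhdsWithin_iff.2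
    ⟨tendsto_const_nhds.div_atTop (tendsto_pow_atTop_atTop_of_one_lt one_lt_two),
      Eventually.of_forall fun k => div_pos hc (pow_pos two_pos k)⟩

lemma not_exists_holder_bound_of_tendsto_atTop {E : Type*} [NormedAddCommGroup E] {f : E → ℝ}
    {s : Set E} {β : ℝ} {x₀ : E} {x : ℕ → E} (hx₀ : x₀ ∈ s)
    (hx : ∀ᶠ k in atTop, x k ∈ s ∧ x k ≠ x₀)
    (hquot : Tendsto (fun k => |f x₀ - f (x k)| / ‖x₀ - x k‖ ^ β) atTop atTop) :
    ¬ ∃ C : ℝ, ∀ x ∈ s, ∀ y ∈ s, |f x - f y| ≤ C * ‖x - y‖ ^ β := by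
  rintro ⟨C, hC⟩
  obtain ⟨k, hCk, hxk, hne⟩ := ((hquot.eventually_gt_atTop C).and hx).exists
  have hd : 0 < ‖x₀ - x k‖ ^ β := rpow_pos_of_pos (norm_pos_iff.2 (sub_ne_zero.2 hne.symm)) _
  exact hCk.not_ge ((div_le_iff₀ hd).2 (hC _ hx₀ _ hxk))

theorem stmt_7_general {n : ℕ} (γ ζ : ℝ) (h1 : Real.exp (-2) < γ) (h3 : ζ < 1)
    (β : ℝ) (hβ : β ∈ Set.Ioc γ ζ) :
    (¬ ∃ C : ℝ, ∀ x ∈ closure {x : EuclideanSpace ℝ (Fin (n + 1)) | γ < ‖x‖ ∧ ‖x‖ < ζ},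
        ∀ y ∈ closure {x : EuclideanSpace ℝ (Fin (n + 1)) | γ < ‖x‖ ∧ ‖x‖ < ζ},
          |fAnn (n := n) γ x - fAnn (n := n) γ y| ≤ C * ‖x - y‖ ^ β) ∧
    (∀ k : ℕ, 1 ≤ k →
      ((β - γ) / 2 ^ k) ^ ((γ - β) / 2) ≤
        |fAnn (n := n) γ (ptAnn n γ) - fAnn (n := n) γ (ptAnn n (γ + (β - γ) / 2 ^ k))| /
          ‖ptAnn n γ - ptAnn n (γ + (β - γ) / 2 ^ k)‖ ^ β) ∧
    Tendsto
      (fun k : ℕ =>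
        |fAnn (n := n) γ (ptAnn n γ) - fAnn (n := n) γ (ptAnn n (γ + (β - γ) / 2 ^ k))| /
          ‖ptAnn n γ - ptAnn n (γ + (β - γ) / 2 ^ k)‖ ^ β)
      atTop atTop := by
  obtain ⟨hγβ, hβζ⟩ := hβ
  have hγ : 0 < γ := (exp_pos _).trans h1
  have hβγ : 0 < β - γ := sub_pos.2 hγβ
  have ht : Tendsto (fun k : ℕ => (β - γ) / 2 ^ k) atTop (𝓝[>] 0) :=
    tendsto_div_two_pow_nhdsGT_zero hβγ
  have ht_pos (k : ℕ) : 0 < (β - γ) / 2 ^ k := by positivity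
  have ht_le (k : ℕ) (hk : 1 ≤ k) : (β - γ) / 2 ^ k ≤ (β - γ) / 2 := by
    gcongr
    exact le_self_pow₀ one_le_two (by omega)
  have hlower (k : ℕ) (hk : 1 ≤ k) := rpow_le_fAnn_ptAnn_holderQuotient n hγ (ht_pos k)
    (by linarith [ht_le k hk]) (ht_le k hk)
  have hquot := tendsto_atTop_mono' atTop (eventually_atTop.2 ⟨1, hlower⟩)
    ((tendsto_rpow_neg_nhdsGT_zero (by linarith)).comp ht)
  have hmem : ∀ᶠ k : ℕ in atTop, ptAnn n (γ + (β - γ) / 2 ^ k) ∈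
      {x : EuclideanSpace ℝ (Fin (n + 1)) | γ < ‖x‖ ∧ ‖x‖ < ζ} :=
    eventually_atTop.2 ⟨1, fun k hk =>
      ptAnn_mem_annulus n hγ (by linarith [ht_pos k]) (by linarith [ht_le k hk])⟩
  have hlim : Tendsto (fun k : ℕ => ptAnn n (γ + (β - γ) / 2 ^ k)) atTop (𝓝 (ptAnn n γ)) := by
    have := (tendsto_const_nhds (x := γ)).add (tendsto_nhdsWithin_iff.1 ht).1
    rw [add_zero] at this
    exact ((isometry_ptAnn n).continuous.tendsto γ).comp this
  refine ⟨not_exists_holder_bound_of_tendsto_atTop (mem_closure_of_tendsto hlim hmem) ?_ hquot,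
    hlower, hquot⟩
  filter_upwards [hmem] with k hk
  exact ⟨subset_closure hk, (isometry_ptAnn n).injective.ne (by linarith [ht_pos k])⟩

theorem stmt_7 {n : ℕ} (γ ζ : ℝ) (h1 : Real.exp (-2) < γ) (h2 : γ < ζ) (h3 : ζ < 1)
    (β : ℝ) (hβ : β ∈ Set.Ioc γ ζ) :
    (¬ ∃ C : ℝ, ∀ x ∈ closure {x : EuclideanSpace ℝ (Fin (n + 1)) | γ < ‖x‖ ∧ ‖x‖ < ζ},
        ∀ y ∈ closure {x : EuclideanSpace ℝ (Fin (n + 1)) | γ < ‖x‖ ∧ ‖x‖ < ζ},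
          |fAnn (n := n) γ x - fAnn (n := n) γ y| ≤ C * ‖x - y‖ ^ β) ∧
    (∀ k : ℕ, 1 ≤ k →
      ((β - γ) / 2 ^ k) ^ ((γ - β) / 2) ≤
        |fAnn (n := n) γ (ptAnn n γ) - fAnn (n := n) γ (ptAnn n (γ + (β - γ) / 2 ^ k))| /
          ‖ptAnn n γ - ptAnn n (γ + (β - γ) / 2 ^ k)‖ ^ β) ∧
    Tendsto
      (fun k : ℕ =>
        |fAnn (n := n) γ (ptAnn n γ) - fAnn (n := n) γ (ptAnn n (γ + (β - γ) / 2 ^ k))| /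
          ‖ptAnn n γ - ptAnn n (γ + (β - γ) / 2 ^ k)‖ ^ β)
      atTop atTop :=
  stmt_7_general γ ζ h1 h3 β hβ
end
end

section
/- Interpolation in variable Hölder spaces (case j = k = 0, β⁺ < α⁻): Let Ω ⊂ ℝⁿ be open, u bounded on Ω, and α, β variable exponents on Ω with 0 < β(x) ≤ β⁺ < α⁻ ≤ α(x) < 1. Then for every 0 < μ ≤ 1/2: [u]*_{0,β(·),Ω} ≤ 2 μ^{−β⁺} |u|_{0,Ω} + μ^{α⁻ − β⁺} [u]*_{0,α(·),Ω}, where [u]*_{0,γ(·),Ω} = sup_{x≠y} d_{x,y}^{γ(x)} |u(x)−u(y)|/|x−y|^{γ(x)} and d_{x,y} = min(dist(x,∂Ω), dist(y,∂Ω)). In particular, for every ε > 0 there is C(ε) with [u]*_{0,β(·),Ω} ≤ C(ε)|u|_{0,Ω} + ε [u]*_{0,α(·),Ω}. -/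
open Real Set Metric

noncomputable section

/-- `|u|_{0,Ω} = sup_Ω |u|` (as `sSup`). -/
def supAbs {n : ℕ} (S : Set (EuclideanSpace ℝ (Fin n))) (u : EuclideanSpace ℝ (Fin n) → ℝ) : ℝ :=
  sSup ((fun x => |u x|) '' S)

/-- Values of the weighted quotients of `[u]*_{0,γ(·),S}`,
with weight `d_{x,y}^{γ(x)}`, `d_{x,y} = min(dist(x,∂S), dist(y,∂S))`. -/
def starSemiSet {n : ℕ} (S : Set (EuclideanSpace ℝ (Fin n)))
    (γ u : EuclideanSpace ℝ (Fin n) → ℝ) : Set ℝ :=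
  {r | ∃ x ∈ S, ∃ y ∈ S, x ≠ y ∧
    r = min (Metric.infDist x (frontier S)) (Metric.infDist y (frontier S)) ^ γ x *
        (|u x - u y| / ‖x - y‖ ^ γ x)}

theorem stmt_12 {n : ℕ} (Ω : Set (EuclideanSpace ℝ (Fin n))) (hΩo : IsOpen Ω)
    (u α β : EuclideanSpace ℝ (Fin n) → ℝ) (αm βp : ℝ) (hβα : βp < αm) (hβp : 0 < βp)
    (hexp : ∀ x ∈ Ω, 0 < β x ∧ β x ≤ βp ∧ αm ≤ α x ∧ α x < 1)
    (hub : BddAbove ((fun x => |u x|) '' Ω))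
    (hsb : BddAbove (starSemiSet Ω α u)) :
    (∀ μ : ℝ, 0 < μ → μ ≤ 1 / 2 → ∀ x ∈ Ω, ∀ y ∈ Ω, x ≠ y →
      min (Metric.infDist x (frontier Ω)) (Metric.infDist y (frontier Ω)) ^ β x *
          (|u x - u y| / ‖x - y‖ ^ β x) ≤
        2 * μ ^ (-βp) * supAbs Ω u + μ ^ (αm - βp) * sSup (starSemiSet Ω α u)) ∧
    (∀ ε : ℝ, 0 < ε → ∃ C : ℝ, ∀ x ∈ Ω, ∀ y ∈ Ω, x ≠ y →
      min (Metric.infDist x (frontier Ω)) (Metric.infDist y (frontier Ω)) ^ β x *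
          (|u x - u y| / ‖x - y‖ ^ β x) ≤
        C * supAbs Ω u + ε * sSup (starSemiSet Ω α u)) := by
  have hS0 : ∀ x ∈ Ω, ∀ y ∈ Ω, x ≠ y → 0 ≤ sSup (starSemiSet Ω α u) := by
    intro x hx y hy hxy
    have hmem : min (Metric.infDist x (frontier Ω)) (Metric.infDist y (frontier Ω)) ^ α x *
        (|u x - u y| / ‖x - y‖ ^ α x) ∈ starSemiSet Ω α u := ⟨x, hx, y, hy, hxy, rfl⟩
    have hd0 : (0:ℝ) ≤ min (Metric.infDist x (frontier Ω)) (Metric.infDist y (frontier Ω)) :=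
      le_min Metric.infDist_nonneg Metric.infDist_nonneg
    have hnn : (0:ℝ) ≤ min (Metric.infDist x (frontier Ω)) (Metric.infDist y (frontier Ω)) ^ α x *
        (|u x - u y| / ‖x - y‖ ^ α x) :=
      mul_nonneg (Real.rpow_nonneg hd0 _)
        (div_nonneg (abs_nonneg _) (Real.rpow_nonneg (norm_nonneg _) _))
    exact le_trans hnn (le_csSup hsb hmem)
  have key : ∀ μ : ℝ, 0 < μ → μ ≤ 1 / 2 → ∀ x ∈ Ω, ∀ y ∈ Ω, x ≠ y →
      min (Metric.infDist x (frontier Ω)) (Metric.infDist y (frontier Ω)) ^ β x *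
          (|u x - u y| / ‖x - y‖ ^ β x) ≤
        2 * μ ^ (-βp) * supAbs Ω u + μ ^ (αm - βp) * sSup (starSemiSet Ω α u) := by
    intro μ hμ hμ2 x hx y hy hxy
    obtain ⟨hβx, hβxp, hαxm, hαx1⟩ := hexp x hx
    set d : ℝ := min (Metric.infDist x (frontier Ω)) (Metric.infDist y (frontier Ω)) with hdef
    have hd0 : (0:ℝ) ≤ d := le_min Metric.infDist_nonneg Metric.infDist_nonneg
    set r : ℝ := ‖x - y‖ with hrdef
    have hr : 0 < r := by
      simp only [hrdef, norm_pos_iff]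
      exact sub_ne_zero.mpr hxy
    set A : ℝ := |u x - u y| with hAdef
    have hA0 : 0 ≤ A := abs_nonneg _
    have hux : |u x| ≤ supAbs Ω u := le_csSup hub ⟨x, hx, rfl⟩
    have huy : |u y| ≤ supAbs Ω u := le_csSup hub ⟨y, hy, rfl⟩
    have hsup0 : 0 ≤ supAbs Ω u := le_trans (abs_nonneg _) hux
    have hS : d ^ α x * (A / r ^ α x) ≤ sSup (starSemiSet Ω α u) :=
      le_csSup hsb ⟨x, hx, y, hy, hxy, rfl⟩
    have hS0' : 0 ≤ sSup (starSemiSet Ω α u) := hS0 x hx y hy hxy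
    rcases le_or_gt r (μ * d) with hcase | hcase
    · -- near case: r ≤ μ d
      have hd : 0 < d := by nlinarith
      have heq : d ^ β x * (A / r ^ β x) =
          (r / d) ^ (α x - β x) * (d ^ α x * (A / r ^ α x)) := by
        rw [Real.div_rpow hr.le hd.le, Real.rpow_sub hr, Real.rpow_sub hd]
        have h1 : r ^ α x ≠ 0 := (Real.rpow_pos_of_pos hr _).ne'
        have h2 : r ^ β x ≠ 0 := (Real.rpow_pos_of_pos hr _).ne'
        have h3 : d ^ α x ≠ 0 := (Real.rpow_pos_of_pos hd _).ne'
        have h4 : d ^ β x ≠ 0 := (Real.rpow_pos_of_pos hd _).ne'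
        field_simp
      have hb : r / d ≤ μ := (div_le_iff₀ hd).mpr (by linarith)
      have hb0 : 0 < r / d := div_pos hr hd
      have hbound : (r / d) ^ (α x - β x) ≤ μ ^ (αm - βp) := by
        calc (r / d) ^ (α x - β x) ≤ (r / d) ^ (αm - βp) :=
              Real.rpow_le_rpow_of_exponent_ge hb0 (le_trans hb (by linarith)) (by linarith)
          _ ≤ μ ^ (αm - βp) := Real.rpow_le_rpow hb0.le hb (by linarith)
      have hAq : 0 ≤ d ^ α x * (A / r ^ α x) :=
        mul_nonneg (Real.rpow_nonneg hd0 _)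
          (div_nonneg hA0 (Real.rpow_nonneg hr.le _))
      have : d ^ β x * (A / r ^ β x) ≤ μ ^ (αm - βp) * sSup (starSemiSet Ω α u) := by
        rw [heq]
        exact mul_le_mul hbound hS hAq (Real.rpow_nonneg hμ.le _)
      have hnn : 0 ≤ 2 * μ ^ (-βp) * supAbs Ω u :=
        mul_nonneg (mul_nonneg (by norm_num) (Real.rpow_nonneg hμ.le _)) hsup0
      linarith
    · -- far case: μ d < r
      have heq : d ^ β x * (A / r ^ β x) = (d / r) ^ β x * A := by
        rw [Real.div_rpow hd0 hr.le]
        ring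
      have hdr : d / r ≤ 1 / μ := by
        rw [div_le_div_iff₀ hr hμ]
        nlinarith
      have hbound : (d / r) ^ β x ≤ μ ^ (-βp) := by
        have h1 : (d / r) ^ β x ≤ (1 / μ) ^ β x :=
          Real.rpow_le_rpow (div_nonneg hd0 hr.le) hdr hβx.le
        have h2 : (1 / μ) ^ β x ≤ (1 / μ) ^ βp := by
          apply Real.rpow_le_rpow_of_exponent_le _ hβxp
          rw [le_div_iff₀ hμ]
          linarith
        have h3 : (1 / μ) ^ βp = μ ^ (-βp) := by
          rw [one_div, Real.inv_rpow hμ.le, Real.rpow_neg hμ.le]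
        linarith
      have hA2 : A ≤ 2 * supAbs Ω u := by
        have : |u x - u y| ≤ |u x| + |u y| := abs_sub _ _
        simp only [hAdef]
        linarith
      have : d ^ β x * (A / r ^ β x) ≤ μ ^ (-βp) * (2 * supAbs Ω u) := by
        rw [heq]
        exact mul_le_mul hbound hA2 hA0 (Real.rpow_nonneg hμ.le _)
      have hnn : 0 ≤ μ ^ (αm - βp) * sSup (starSemiSet Ω α u) :=
        mul_nonneg (Real.rpow_nonneg hμ.le _) hS0'
      linarith
  refine ⟨key, ?_⟩
  intro ε hε
  set μ : ℝ := min (ε ^ (1 / (αm - βp))) (1 / 2) with hμdef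
  have hμ : 0 < μ := lt_min (Real.rpow_pos_of_pos hε _) (by norm_num)
  have hμ2 : μ ≤ 1 / 2 := min_le_right _ _
  have hsub : 0 < αm - βp := sub_pos.mpr hβα
  have hμa : μ ^ (αm - βp) ≤ ε := by
    calc μ ^ (αm - βp) ≤ (ε ^ (1 / (αm - βp))) ^ (αm - βp) :=
          Real.rpow_le_rpow hμ.le (min_le_left _ _) hsub.le
      _ = ε := by
          rw [← Real.rpow_mul hε.le, one_div, inv_mul_cancel₀ hsub.ne', Real.rpow_one]
  refine ⟨2 * μ ^ (-βp), fun x hx y hy hxy => ?_⟩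
  have h1 := key μ hμ hμ2 x hx y hy hxy
  have h2 : μ ^ (αm - βp) * sSup (starSemiSet Ω α u) ≤ ε * sSup (starSemiSet Ω α u) :=
    mul_le_mul_of_nonneg_right hμa (hS0 x hx y hy hxy)
  linarith
end
end
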